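/- arXiv:cs/0011011 — 5 statements merged into one kernel-verified Lean document; each statement's English description precedes it below -/
import Mathlib

section
/- Let G be an XML-grammar over A ∪ Ā generating language L from axiom X_α, with nonterminals {X_a | a ∈ A}, and assume G is reduced. Then for each a ∈ A, the language generated by X_a equals F_a(L), the set of factors of words of L that are Dyck primes starting with letter a. -/
variable {α : Type}

/-- Dyck words over `A ∪ Ā`: a letter is a pair `(a, true)` (opening tag `a`)
or `(a, false)` (closing tag `ā`). `IsDyck w` means `w` is well-balanced. -/
inductive IsDyck : List (α × Bool) → Prop
  | nil : IsDyck []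
  | cons (a : α) {u v : List (α × Bool)} : IsDyck u → IsDyck v →
      IsDyck ((a, true) :: u ++ (a, false) :: v)

/-- `IsDyckPrime a w`: `w` is a Dyck prime starting with the letter `a`,
i.e. `w = a u ā` with `u` well-balanced. Membership in `D_a`. -/
def IsDyckPrime (a : α) (w : List (α × Bool)) : Prop :=
  ∃ u, IsDyck u ∧ w = (a, true) :: u ++ [(a, false)]

/-- Membership in the set `D` of all Dyck primes. -/
def IsPrime (w : List (α × Bool)) : Prop := ∃ a, IsDyckPrime a w

/-- `F_a(L) = D_a ∩ F(L)`: factors of words of `L` that are Dyck primes starting with `a`. -/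
def Fa (L : Set (List (α × Bool))) (a : α) : Set (List (α × Bool)) :=
  {w | IsDyckPrime a w ∧ ∃ v ∈ L, w <:+: v}

/-- The surface `S_a(L)`: traces `a₁ ⋯ aₙ` of words `a u₁ ⋯ uₙ ā ∈ F_a(L)` with `uᵢ ∈ D_{aᵢ}`. -/
def Surface (L : Set (List (α × Bool))) (a : α) : Set (List α) :=
  {m | ∃ us : List (List (α × Bool)), List.Forall₂ IsDyckPrime m us ∧
      (a, true) :: us.flatten ++ [(a, false)] ∈ Fa L a}

/-- The language generated by nonterminal `X_a` in the XML-grammar with production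
bodies `R : α → Set (List α)` (a body `a₁ ⋯ aₙ ∈ R a` encodes `X_a → a X_{a₁} ⋯ X_{aₙ} ā`). -/
inductive Gen (R : α → Set (List α)) : α → List (α × Bool) → Prop
  | mk (a : α) (m : List α) (us : List (List (α × Bool))) :
      m ∈ R a → List.Forall₂ (Gen R) m us →
      Gen R a ((a, true) :: us.flatten ++ [(a, false)])

/-- The grammar `R` with axiom `X_{a₀}` is reduced: every nonterminal is accessible
from the axiom and every nonterminal is productive. -/
def Reduced (R : α → Set (List α)) (a₀ : α) : Prop :=
  (∀ a, Relation.ReflTransGen (fun x y => ∃ m ∈ R x, y ∈ m) a₀ a) ∧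
  (∀ a, ∃ w, Gen R a w)

/-- An XML-grammar: each production body set `R_a` is a regular language over the
nonterminal alphabet (identified with `A`). -/
def IsXMLGrammar (R : α → Set (List α)) : Prop :=
  ∀ a, Language.IsRegular (R a : Language α)

/-- An XML-language: a language generated by some XML-grammar. -/
def IsXMLLanguage (L : Set (List (α × Bool))) : Prop :=
  ∃ (a₀ : α) (R : α → Set (List α)), IsXMLGrammar R ∧ L = {w | Gen R a₀ w}

namespace XMLProof

lemma prefix_append_cases {β : Type*} {l x y : List β} (h : l <+: x ++ y) :
    l <+: x ∨ ∃ r, l = x ++ r ∧ r <+: y := by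
  obtain ⟨t, ht⟩ := h
  rcases List.append_eq_append_iff.mp ht with ⟨k, hk1, hk2⟩ | ⟨k, hk1, hk2⟩
  · exact Or.inl ⟨k, hk1.symm⟩
  · exact Or.inr ⟨k, hk1, ⟨t, hk2.symm⟩⟩

def height (w : List (α × Bool)) : ℤ :=
  (w.map (fun p => if p.2 then (1 : ℤ) else -1)).sum

lemma height_append (u v : List (α × Bool)) :
    height (u ++ v) = height u + height v := by
  simp [height]

lemma dyck_append {u v : List (α × Bool)} (hu : IsDyck u) (hv : IsDyck v) :
    IsDyck (u ++ v) := by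
  induction hu generalizing v with
  | nil => simpa
  | cons a h1 h2 ih1 ih2 =>
    have := IsDyck.cons a h1 (ih2 hv)
    simpa using this

lemma prime_dyck {a : α} {w : List (α × Bool)} (h : IsDyckPrime a w) : IsDyck w := by
  obtain ⟨u, hu, rfl⟩ := h
  exact IsDyck.cons a hu IsDyck.nil

lemma height_dyck {u : List (α × Bool)} (h : IsDyck u) : height u = 0 := by
  induction h with
  | nil => simp [height]
  | cons a h1 h2 ih1 ih2 => simp [height] at ih1 ih2 ⊢; omega

lemma height_prefix_nonneg {u : List (α × Bool)} (h : IsDyck u) :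
    ∀ p, p <+: u → 0 ≤ height p := by
  induction h with
  | nil =>
    intro p hp
    rw [List.prefix_nil] at hp
    simp [hp, height]
  | cons a h1 h2 ih1 ih2 =>
    rename_i u v
    intro p hp
    rcases p with _ | ⟨x, q⟩
    · simp [height]
    · have hx : x = (a, true) ∧ q <+: u ++ (a, false) :: v := by
        obtain ⟨t, ht⟩ := hp
        simp only [List.cons_append, List.cons.injEq] at ht
        exact ⟨ht.1, ⟨t, ht.2⟩⟩
      obtain ⟨rfl, hq⟩ := hx
      rcases prefix_append_cases hq with hqu | ⟨r, rfl, hr⟩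
      · have := ih1 q hqu
        simp [height] at this ⊢
        omega
      · have hu0 : height u = 0 := height_dyck h1
        rcases r with _ | ⟨y, r'⟩
        · simp [height] at hu0 ⊢
          omega
        · have hy : y = (a, false) ∧ r' <+: v := by
            obtain ⟨t, ht⟩ := hr
            simp only [List.cons_append, List.cons.injEq] at ht
            exact ⟨ht.1, ⟨t, ht.2⟩⟩
          obtain ⟨rfl, hr'⟩ := hy
          have h2' := ih2 r' hr'
          simp [height] at h2' hu0 ⊢
          omega

lemma prime_prefix_pos {a : α} {w : List (α × Bool)} (h : IsDyckPrime a w)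
    {p : List (α × Bool)} (hp : p <+: w) (h0 : p ≠ []) (h1 : p ≠ w) :
    1 ≤ height p := by
  obtain ⟨u, hu, rfl⟩ := h
  rcases p with _ | ⟨x, q⟩
  · exact absurd rfl h0
  have hx : x = (a, true) ∧ q <+: u ++ [(a, false)] := by
    obtain ⟨t, ht⟩ := hp
    simp only [List.cons_append, List.cons.injEq] at ht
    exact ⟨ht.1, ⟨t, ht.2⟩⟩
  obtain ⟨rfl, hq⟩ := hx
  have hqu : q <+: u := by
    rcases prefix_append_cases hq with h' | ⟨r, rfl, hr⟩
    · exact h'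
    · rcases r with _ | ⟨y, r'⟩
      · simpa using List.prefix_refl u
      · exfalso
        obtain ⟨t, ht⟩ := hr
        simp only [List.cons_append, List.cons.injEq] at ht
        obtain ⟨rfl, ht2⟩ := ht
        have hlen := congrArg List.length ht2
        simp at hlen
        obtain ⟨rfl, -⟩ := hlen
        exact h1 (by simp)
  have := height_prefix_nonneg hu q hqu
  simp [height] at this ⊢
  omega

lemma prime_ne_nil {a : α} {w : List (α × Bool)} (h : IsDyckPrime a w) : w ≠ [] := by
  obtain ⟨u, _, rfl⟩ := h; simp

lemma height_prime {a : α} {w : List (α × Bool)} (h : IsDyckPrime a w) : height w = 0 :=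
  height_dyck (prime_dyck h)

lemma prime_suffix_nonpos {a : α} {w : List (α × Bool)} (h : IsDyckPrime a w)
    {s : List (α × Bool)} (hs : s <:+ w) (h1 : s ≠ w) :
    height s ≤ 0 := by
  obtain ⟨p, hp⟩ := hs
  have hps : height p + height s = 0 := by rw [← height_append, hp, height_prime h]
  rcases eq_or_ne p [] with rfl | hpne
  · simp at hp; exact absurd hp h1
  rcases eq_or_ne p w with rfl | hpw
  · have hs0 : s = [] := by
      have := congrArg List.length hp
      simp at this
      exact this
    simp [hs0, height]
  have := prime_prefix_pos h ⟨s, hp⟩ hpne hpw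
  omega

lemma prime_suffix_neg {a : α} {w : List (α × Bool)} (h : IsDyckPrime a w)
    {s : List (α × Bool)} (hs : s <:+ w) (h0 : s ≠ []) (h1 : s ≠ w) :
    height s ≤ -1 := by
  obtain ⟨p, hp⟩ := hs
  have hps : height p + height s = 0 := by rw [← height_append, hp, height_prime h]
  have hpne : p ≠ [] := by rintro rfl; simp at hp; exact h1 hp
  have hpw : p ≠ w := by
    rintro rfl
    have := congrArg List.length hp
    simp at this
    exact h0 this
  have := prime_prefix_pos h ⟨s, hp⟩ hpne hpw
  omega

lemma forall₂_exists_left {β γ : Type*} {r : β → γ → Prop} :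
    ∀ {l₁ : List β} {l₂ : List γ}, List.Forall₂ r l₁ l₂ → ∀ c ∈ l₂, ∃ b ∈ l₁, r b c := by
  intro l₁ l₂ h
  induction h with
  | nil => simp
  | cons hr _ ih =>
    intro c hc
    rcases List.mem_cons.mp hc with rfl | hc
    · exact ⟨_, by simp, hr⟩
    · obtain ⟨b, hb, hrb⟩ := ih c hc
      exact ⟨b, by simp [hb], hrb⟩

lemma dyck_flatten {us : List (List (α × Bool))} (h : ∀ u ∈ us, IsPrime u) :
    IsDyck us.flatten := by
  induction us with
  | nil => exact IsDyck.nil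
  | cons u us ih =>
    obtain ⟨a, hp⟩ := h u (by simp)
    rw [List.flatten_cons]
    exact dyck_append (prime_dyck hp) (ih fun v hv => h v (by simp [hv]))

lemma gen_prime (R : α → Set (List α)) :
    ∀ n (w : List (α × Bool)), w.length ≤ n → ∀ a, Gen R a w → IsDyckPrime a w := by
  intro n
  induction n with
  | zero =>
    intro w hw a hg
    rcases hg with ⟨a, m, us, hm, hf⟩
    simp at hw
  | succ n ih =>
    intro w hw a hg
    rcases hg with ⟨a, m, us, hm, hf⟩
    have hprime : ∀ u ∈ us, IsPrime u := by
      intro u hu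
      obtain ⟨c, -, hgc⟩ := forall₂_exists_left hf u hu
      have h1 : u.length ≤ us.flatten.length :=
        (List.sublist_flatten_of_mem hu).length_le
      have hlen : u.length ≤ n := by
        simp only [List.length_append, List.length_cons, List.length_singleton] at hw
        omega
      exact ⟨c, ih u hlen c hgc⟩
    exact ⟨us.flatten, dyck_flatten hprime, rfl⟩

lemma infix_append_cases {β : Type*} {w x y : List β} (h : w <:+: x ++ y) :
    w <:+: x ∨ w <:+: y ∨
      ∃ w₁ w₂, w = w₁ ++ w₂ ∧ w₁ <:+ x ∧ w₂ <+: y ∧ w₁ ≠ [] ∧ w₂ ≠ [] := by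
  obtain ⟨s, t, hv⟩ := h
  rw [List.append_assoc] at hv
  rcases List.append_eq_append_iff.mp hv with ⟨k, hk1, hk2⟩ | ⟨k, hk1, hk2⟩
  · rcases List.append_eq_append_iff.mp hk2 with ⟨j, hj1, hj2⟩ | ⟨j, hj1, hj2⟩
    · left
      exact ⟨s, j, by rw [hk1, hj1, List.append_assoc]⟩
    · rcases eq_or_ne k [] with rfl | hkne
      · right; left
        refine ⟨[], t, ?_⟩
        simp only [List.nil_append] at hj1 ⊢
        rw [hj1, hj2]
      rcases eq_or_ne j [] with rfl | hjne
      · left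
        refine ⟨s, [], ?_⟩
        simp only [List.append_nil] at hj1 ⊢
        rw [hj1, hk1]
      right; right
      exact ⟨k, j, hj1, ⟨s, hk1.symm⟩, ⟨t, hj2.symm⟩, hkne, hjne⟩
  · right; left
    exact ⟨k, t, by rw [hk2, ← List.append_assoc]⟩


lemma prime_infix_prime {a b : α} {w F : List (α × Bool)} (hw : IsDyckPrime a w)
    (hF : IsDyck F) (h : w <:+: (b, true) :: F ++ [(b, false)]) :
    w = (b, true) :: F ++ [(b, false)] ∨ w <:+: F := by
  set v := (b, true) :: F ++ [(b, false)] with hvdef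
  have hv : IsDyckPrime b v := ⟨F, hF, rfl⟩
  obtain ⟨s, t, hst⟩ := h
  have h0 : height s + height w + height t = 0 := by
    have := height_prime hv
    rw [← hst] at this
    simp [height_append] at this
    omega
  have hw0 : height w = 0 := height_prime hw
  have hnil : height ([] : List (α × Bool)) = 0 := by simp [height]
  rcases eq_or_ne s [] with rfl | hsne
  · rcases eq_or_ne t [] with rfl | htne
    · left; simpa using hst
    · exfalso
      have htv : t <:+ v := ⟨w, by simpa using hst⟩
      have htnev : t ≠ v := by
        rintro rfl
        have := congrArg List.length hst
        simp at this
        exact prime_ne_nil hw this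
      have := prime_suffix_neg hv htv htne htnev
      omega
  rcases eq_or_ne t [] with rfl | htne
  · exfalso
    have hsv : s <+: v := ⟨w, by simpa using hst⟩
    have hsnev : s ≠ v := by
      rintro rfl
      have := congrArg List.length hst
      simp at this
      exact prime_ne_nil hw this
    have := prime_prefix_pos hv hsv hsne hsnev
    omega
  · -- s ≠ [], t ≠ []
    right
    rcases s with _ | ⟨x, s'⟩
    · exact absurd rfl hsne
    obtain ⟨t', c, rfl⟩ := t.eq_nil_or_concat.resolve_left htne
    have hx : x = (b, true) ∧ s' ++ w ++ (t' ++ [c]) = F ++ [(b, false)] := by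
      rw [hvdef] at hst
      simp only [List.cons_append, List.append_assoc, List.cons.injEq] at hst ⊢
      exact ⟨hst.1, by rw [← hst.2]; simp [List.append_assoc]⟩
    obtain ⟨rfl, heq⟩ := hx
    have heq2 : (s' ++ w ++ t') ++ [c] = F ++ [(b, false)] := by
      rw [← heq]; simp [List.append_assoc]
    have := List.append_inj' heq2 rfl
    exact ⟨s', t', this.1⟩

lemma prime_infix_flatten {a : α} {w : List (α × Bool)} (hw : IsDyckPrime a w) :
    ∀ us : List (List (α × Bool)), (∀ u ∈ us, IsPrime u) → w <:+: us.flatten →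
      ∃ u ∈ us, w <:+: u := by
  intro us
  induction us with
  | nil =>
    intro _ h
    rw [List.flatten_nil, List.infix_nil] at h
    exact absurd h (prime_ne_nil hw)
  | cons u us ih =>
    intro hprime h
    rw [List.flatten_cons] at h
    rcases infix_append_cases h with h' | h' | ⟨w₁, w₂, rfl, h1, h2, hne1, hne2⟩
    · exact ⟨u, by simp, h'⟩
    · obtain ⟨u', hu', hw'⟩ := ih (fun v hv => hprime v (by simp [hv])) h'
      exact ⟨u', by simp [hu'], hw'⟩
    · exfalso
      -- w₁ is a nonempty proper prefix of the prime w, so height w₁ ≥ 1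
      have hw₁w : w₁ ≠ w₁ ++ w₂ := by
        intro hcontra
        have := congrArg List.length hcontra
        simp at this
        exact hne2 this
      have hpos : 1 ≤ height w₁ :=
        prime_prefix_pos hw ⟨w₂, rfl⟩ hne1 hw₁w
      -- w₁ is a suffix of the prime u, with height w₁ ≥ 1 > 0 it must be u itself
      obtain ⟨c, hc⟩ := hprime u (by simp)
      rcases eq_or_ne w₁ u with rfl | hneq
      · have := height_prime hc
        omega
      · have := prime_suffix_nonpos hc h1 hneq
        omega

lemma flatten_mem_length {u : List (α × Bool)} {us : List (List (α × Bool))}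
    (hu : u ∈ us) : u.length ≤ us.flatten.length :=
  (List.sublist_flatten_of_mem hu).length_le

lemma gen_of_infix (R : α → Set (List α)) :
    ∀ n (v : List (α × Bool)), v.length ≤ n → ∀ b, Gen R b v →
      ∀ a (w : List (α × Bool)), IsDyckPrime a w → w <:+: v → Gen R a w := by
  intro n
  induction n with
  | zero =>
    intro v hv b hg
    rcases hg with ⟨b, m, us, hm, hf⟩
    simp at hv
  | succ n ih =>
    intro v hv b hg a w hw hinf
    rcases hg with ⟨b, m, us, hm, hf⟩
    have hprime : ∀ u ∈ us, IsPrime u := by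
      intro u hu
      obtain ⟨c, -, hgc⟩ := forall₂_exists_left hf u hu
      exact ⟨c, gen_prime R u.length u le_rfl c hgc⟩
    rcases prime_infix_prime hw (dyck_flatten hprime) hinf with heq | hinfF
    · -- w equals the whole word; then a = b
      have hab : a = b := by
        obtain ⟨e, he, hwe⟩ := hw
        rw [hwe] at heq
        simp only [List.cons_append, List.cons.injEq, Prod.mk.injEq] at heq
        exact heq.1.1
      subst hab
      rw [heq]
      exact Gen.mk a m us hm hf
    · obtain ⟨u, hu, hwu⟩ := prime_infix_flatten hw us hprime hinfF
      obtain ⟨c, -, hgc⟩ := forall₂_exists_left hf u hu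
      have hlen : u.length ≤ n := by
        have h1 := flatten_mem_length hu
        simp only [List.length_append, List.length_cons, List.length_singleton] at hv
        omega
      exact ih u hlen c hgc a w hw hwu


lemma forall₂_map {R : α → Set (List α)} (f : α → List (α × Bool))
    (hf : ∀ c, Gen R c (f c)) : ∀ l : List α, List.Forall₂ (Gen R) l (l.map f) := by
  intro l
  induction l with
  | nil => simp
  | cons c l ih => exact List.Forall₂.cons (hf c) ih

lemma exists_superword (R : α → Set (List α)) (hprod : ∀ c, ∃ w, Gen R c w)
    {a₀ a : α} (hacc : Relation.ReflTransGen (fun x y => ∃ m ∈ R x, y ∈ m) a₀ a) :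
    ∀ w, Gen R a w → ∃ v, Gen R a₀ v ∧ w <:+: v := by
  induction hacc with
  | refl => exact fun w hw => ⟨w, hw, List.infix_refl w⟩
  | tail hstep hr ih =>
    rename_i b c
    intro w hw
    obtain ⟨m, hm, hcm⟩ := hr
    obtain ⟨m₁, m₂, rfl⟩ := List.append_of_mem hcm
    classical
    let f : α → List (α × Bool) := fun d => Classical.choose (hprod d)
    have hfgen : ∀ d, Gen R d (f d) := fun d => Classical.choose_spec (hprod d)
    set us : List (List (α × Bool)) := m₁.map f ++ w :: m₂.map f with hus
    have hforall : List.Forall₂ (Gen R) (m₁ ++ c :: m₂) us :=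
      List.rel_append (forall₂_map f hfgen m₁)
        (List.Forall₂.cons hw (forall₂_map f hfgen m₂))
    have hgb : Gen R b ((b, true) :: us.flatten ++ [(b, false)]) :=
      Gen.mk b (m₁ ++ c :: m₂) us hm hforall
    obtain ⟨v, hv, hinf⟩ := ih _ hgb
    refine ⟨v, hv, List.IsInfix.trans ?_ hinf⟩
    have h1 : w <:+: us.flatten := by
      rw [hus]
      refine ⟨(m₁.map f).flatten, (m₂.map f).flatten, ?_⟩
      simp
    exact h1.trans ⟨[(b, true)], [(b, false)], rfl⟩

end XMLProof

/-- Lemma 3.1: for a reduced XML-grammar `G` generating `L` from axiom `X_{a₀}`,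
the language generated by each nonterminal `X_a` is exactly `F_a(L)`. -/
theorem xml_nonterminal_generates_factors [Fintype α]
    (R : α → Set (List α)) (a₀ : α)
    (hG : IsXMLGrammar R) (hred : Reduced R a₀)
    (L : Set (List (α × Bool))) (hL : L = {w | Gen R a₀ w}) :
    ∀ a : α, {w | Gen R a w} = Fa L a := by
  subst hL
  intro a
  ext w
  simp only [Set.mem_setOf_eq, Fa]
  constructor
  · intro hw
    refine ⟨XMLProof.gen_prime R w.length w le_rfl a hw, ?_⟩
    obtain ⟨v, hv, hinf⟩ := XMLProof.exists_superword R hred.2 (hred.1 a) w hw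
    exact ⟨v, hv, hinf⟩
  · rintro ⟨hprime, v, hv, hinf⟩
    exact XMLProof.gen_of_infix R v.length v le_rfl a₀ hv a w hprime hinf
end

section
/- If L ⊆ D_a is an XML-language (generated by some reduced XML-grammar with axiom X_a), then F_a(L) = L: every well-formed factor of L starting (and ending) with the tag pair a, ā that is a Dyck prime in D_a and is a factor of some word of L, is itself a word of L. -/
variable {α : Type}

/-- Balance of a word of tags. -/
def bal (w : List (α × Bool)) : ℤ := (w.map fun p => if p.2 then (1 : ℤ) else -1).sum

@[simp] lemma bal_nil : bal ([] : List (α × Bool)) = 0 := rfl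

@[simp] lemma bal_cons (p : α × Bool) (w : List (α × Bool)) :
    bal (p :: w) = (if p.2 then (1 : ℤ) else -1) + bal w := by
  simp [bal]

@[simp] lemma bal_append (u v : List (α × Bool)) : bal (u ++ v) = bal u + bal v := by
  simp [bal]

lemma prefix_append_cases {p u v : List (α × Bool)} (h : p <+: u ++ v) :
    p <+: u ∨ ∃ q, q <+: v ∧ p = u ++ q := by
  obtain ⟨t, ht⟩ := h
  rcases List.append_eq_append_iff.mp ht with ⟨a', h1, _⟩ | ⟨c', h1, h2⟩
  · exact Or.inl ⟨a', h1.symm⟩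
  · exact Or.inr ⟨c', ⟨t, h2.symm⟩, h1⟩

lemma IsDyck.bal_eq_zero {u : List (α × Bool)} (h : IsDyck u) : bal u = 0 := by
  induction h with
  | nil => simp
  | cons a hu hv ihu ihv => simp [ihu, ihv]

lemma IsDyck.bal_prefix_nonneg {w : List (α × Bool)} (h : IsDyck w) :
    ∀ p, p <+: w → 0 ≤ bal p := by
  induction h with
  | nil => intro p hp; simp [List.prefix_nil.mp hp]
  | cons a hu hv ihu ihv =>
    rename_i u v
    intro p hp
    rcases p with _ | ⟨q, p'⟩
    · simp
    · obtain ⟨t, ht⟩ := hp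
      simp only [List.cons_append, List.cons.injEq] at ht
      obtain ⟨rfl, ht⟩ := ht
      rcases prefix_append_cases (show p' <+: u ++ (a, false) :: v from ⟨t, ht⟩)
        with h1 | ⟨q, hq, rfl⟩
      · have := ihu p' h1; simp; omega
      · rcases q with _ | ⟨r, q'⟩
        · simp [hu.bal_eq_zero]
        · obtain ⟨s, hs⟩ := hq
          simp only [List.cons_append, List.cons.injEq] at hs
          obtain ⟨rfl, hs⟩ := hs
          have := ihv q' ⟨s, hs⟩
          simp [hu.bal_eq_zero]; omega

lemma IsDyck.bal_suffix_nonpos {u s : List (α × Bool)} (h : IsDyck u) (hs : s <:+ u) :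
    bal s ≤ 0 := by
  obtain ⟨p, rfl⟩ := hs
  have h1 := h.bal_prefix_nonneg p ⟨s, rfl⟩
  have h2 := h.bal_eq_zero
  rw [bal_append] at h2; omega

lemma IsDyck.append {u v : List (α × Bool)} (hu : IsDyck u) (hv : IsDyck v) :
    IsDyck (u ++ v) := by
  induction hu with
  | nil => simpa
  | cons a h1 h2 ih1 ih2 =>
    have := IsDyck.cons a h1 ih2
    simpa using this

lemma IsDyckPrime.isDyck {a : α} {w : List (α × Bool)} (h : IsDyckPrime a w) : IsDyck w := by
  obtain ⟨u, hu, rfl⟩ := h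
  exact IsDyck.cons a hu IsDyck.nil

lemma isDyck_flatten {us : List (List (α × Bool))} (h : ∀ u ∈ us, IsDyck u) :
    IsDyck us.flatten := by
  induction us with
  | nil => exact IsDyck.nil
  | cons u us ih =>
    simpa using (h u (by simp)).append (ih fun v hv => h v (by simp [hv]))

lemma IsDyckPrime.ne_nil {a : α} {w : List (α × Bool)} (h : IsDyckPrime a w) : w ≠ [] := by
  obtain ⟨u, _, rfl⟩ := h; simp

/-- A proper nonempty prefix of a Dyck prime has positive balance. -/
lemma IsDyckPrime.bal_prefix_pos {a : α} {w p : List (α × Bool)} (h : IsDyckPrime a w)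
    (hp : p <+: w) (hne : p ≠ []) (hnw : p ≠ w) : 1 ≤ bal p := by
  obtain ⟨u, hu, rfl⟩ := h
  rcases p with _ | ⟨q, p'⟩
  · exact absurd rfl hne
  · obtain ⟨t, ht⟩ := hp
    simp only [List.cons_append, List.cons.injEq] at ht
    obtain ⟨rfl, ht⟩ := ht
    rcases prefix_append_cases (show p' <+: u ++ [(a, false)] from ⟨t, ht⟩)
      with h1 | ⟨q, hq, rfl⟩
    · have := hu.bal_prefix_nonneg p' h1; simp; omega
    · rcases q with _ | ⟨r, q'⟩
      · simp [hu.bal_eq_zero]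
      · obtain ⟨s, hs⟩ := hq
        simp only [List.cons_append, List.cons.injEq] at hs
        obtain ⟨rfl, hs⟩ := hs
        obtain ⟨rfl, rfl⟩ := List.append_eq_nil_iff.mp hs
        simp at hnw

/-- A Dyck-prime infix of a concatenation of Dyck words lies inside one of them. -/
lemma infix_flatten {a : α} {w : List (α × Bool)} (hw : IsDyckPrime a w) :
    ∀ us : List (List (α × Bool)), (∀ u ∈ us, IsDyck u) → w <:+: us.flatten →
      ∃ u ∈ us, w <:+: u := by
  intro us
  induction us with
  | nil =>
    intro _ hinf
    exact absurd (List.eq_nil_of_infix_nil (by simpa using hinf)) hw.ne_nil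
  | cons u us ih =>
    intro hd hinf
    obtain ⟨x, y, hxy⟩ := hinf
    simp only [List.flatten_cons] at hxy
    rw [List.append_assoc] at hxy
    rcases List.append_eq_append_iff.mp hxy with ⟨a', h1, h2⟩ | ⟨c', h1, h2⟩
    · -- u = x ++ a', w ++ y = a' ++ flatten us
      rcases List.append_eq_append_iff.mp h2 with ⟨s, hs1, hs2⟩ | ⟨s, hs1, hs2⟩
      · -- a' = w ++ s : w is an infix of u
        exact ⟨u, by simp, ⟨x, s, by rw [h1, hs1]; simp⟩⟩
      · -- w = a' ++ s, flatten us = s ++ y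
        rcases eq_or_ne a' [] with rfl | hane
        · -- w = s, infix of flatten us
          obtain ⟨v, hv, hwv⟩ := ih (fun v hv => hd v (by simp [hv]))
            ⟨[], y, by simp [hs1, hs2]⟩
          exact ⟨v, by simp [hv], hwv⟩
        · rcases eq_or_ne s [] with rfl | hsne
          · -- w = a', suffix of u
            exact ⟨u, by simp, ⟨x, [], by simp [h1, hs1]⟩⟩
          · exfalso
            have hpre : a' <+: w := ⟨s, hs1.symm⟩
            have hanw : a' ≠ w := fun h => hsne (by
              have := hs1; rw [h] at this; simpa using this.symm)
            have h1' := hw.bal_prefix_pos hpre hane hanw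
            have h2' := (hd u (by simp)).bal_suffix_nonpos ⟨x, h1.symm⟩
            omega
    · -- x = u ++ c', flatten us = c' ++ w ++ y
      obtain ⟨v, hv, hwv⟩ := ih (fun v hv => hd v (by simp [hv])) ⟨c', y, by rw [h2, List.append_assoc]⟩
      exact ⟨v, by simp [hv], hwv⟩

lemma forall₂_mem_right {P : α → List (α × Bool) → Prop} :
    ∀ {m : List α} {us : List (List (α × Bool))}, List.Forall₂ P m us →
      ∀ u ∈ us, ∃ b, P b u := by
  intro m us h
  induction h with
  | nil => simp
  | cons hbu _ ih =>
    intro u hu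
    rcases List.mem_cons.mp hu with rfl | hu
    · exact ⟨_, hbu⟩
    · exact ih u hu

lemma length_le_flatten {u : List (α × Bool)} :
    ∀ {us : List (List (α × Bool))}, u ∈ us → u.length ≤ us.flatten.length := by
  intro us hu
  induction us with
  | nil => simp at hu
  | cons v us ih =>
    rcases List.mem_cons.mp hu with rfl | hu
    · simp only [List.flatten_cons, List.length_append]; omega
    · have := ih hu
      simp only [List.flatten_cons, List.length_append]; omega

lemma gen_prime {R : α → Set (List α)} :
    ∀ n {c : α} {w : List (α × Bool)}, w.length ≤ n → Gen R c w → IsDyckPrime c w := by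
  intro n
  induction n with
  | zero => intro c w hl h; cases h; simp at hl
  | succ n ih =>
    intro c w hl h
    cases h with
    | mk a m us hm hf =>
      refine ⟨us.flatten, isDyck_flatten fun u hu => ?_, rfl⟩
      obtain ⟨b, hb⟩ := forall₂_mem_right hf u hu
      have hlen : u.length ≤ n := by
        have := length_le_flatten hu
        simp only [List.length_append, List.length_cons, List.length_nil] at hl; omega
      exact (ih hlen hb).isDyck

/-- Main lemma: a Dyck-prime infix of a generated word is itself generated. -/
lemma gen_of_infix {R : α → Set (List α)} :
    ∀ n {b : α} {v : List (α × Bool)} {a : α} {w : List (α × Bool)},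
      v.length ≤ n → Gen R b v → IsDyckPrime a w → w <:+: v → Gen R a w := by
  intro n
  induction n with
  | zero => intro b v a w hl h; cases h; simp at hl
  | succ n ih =>
    intro b v a w hl hGen hw hinf
    obtain ⟨u, hu, rfl⟩ := hw
    cases hGen with
    | mk b m us hm hf =>
      have hFdyck : IsDyck us.flatten := isDyck_flatten fun t ht => by
        obtain ⟨c, hc⟩ := forall₂_mem_right hf t ht
        exact (gen_prime t.length le_rfl hc).isDyck
      obtain ⟨x, y, hxy⟩ := hinf
      match x with
      | [] =>
        simp only [List.nil_append, List.cons_append, List.cons.injEq, Prod.mk.injEq,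
          List.append_assoc] at hxy
        obtain ⟨⟨rfl, -⟩, hxy⟩ := hxy
        rcases List.eq_nil_or_concat y with rfl | ⟨y', c, rfl⟩
        · -- w = v
          obtain ⟨rfl, -⟩ := List.append_inj' hxy (by simp)
          exact Gen.mk a m us hm hf
        · exfalso
          have hxy' : ((u ++ [(a, false)]) ++ y') ++ [c] = us.flatten ++ [(a, false)] := by
            rw [← hxy]; simp
          obtain ⟨hF, -⟩ := List.append_inj' hxy' (by simp)
          have hnn : (0 : ℤ) ≤ bal (u ++ [(a, false)]) :=
            hFdyck.bal_prefix_nonneg _ ⟨y', hF⟩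
          simp [hu.bal_eq_zero] at hnn
      | (p, pb) :: x' =>
        simp only [List.cons_append, List.cons.injEq, Prod.mk.injEq,
          List.append_assoc] at hxy
        obtain ⟨-, hxy⟩ := hxy
        rcases List.eq_nil_or_concat y with rfl | ⟨y', c, rfl⟩
        · exfalso
          have hxy' : (x' ++ ((a, true) :: u)) ++ [(a, false)]
              = us.flatten ++ [(b, false)] := by
            rw [← hxy]; simp
          obtain ⟨hF, -⟩ := List.append_inj' hxy' (by simp)
          have hnp : bal ((a, true) :: u) ≤ 0 := hFdyck.bal_suffix_nonpos ⟨x', hF⟩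
          simp [hu.bal_eq_zero] at hnp
        · -- interior: w <:+: us.flatten
          have hxy' : (x' ++ ((a, true) :: u ++ [(a, false)] ++ y')) ++ [c]
              = us.flatten ++ [(b, false)] := by
            rw [← hxy]; simp
          obtain ⟨hF, -⟩ := List.append_inj' hxy' (by simp)
          have hwprime : IsDyckPrime a ((a, true) :: u ++ [(a, false)]) := ⟨u, hu, rfl⟩
          obtain ⟨t, ht, hwt⟩ := infix_flatten hwprime us
            (fun t ht => by
              obtain ⟨c, hc⟩ := forall₂_mem_right hf t ht
              exact (gen_prime t.length le_rfl hc).isDyck)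
            ⟨x', y', by rw [← hF]; simp⟩
          obtain ⟨c, hc⟩ := forall₂_mem_right hf t ht
          have hlen : t.length ≤ n := by
            have h1 := length_le_flatten ht
            simp only [List.length_append, List.length_cons, List.length_nil] at hl; omega
          exact ih hlen hc hwprime hwt


/-- Corollary: if `L ⊆ D_a` is an XML-language generated by a reduced XML-grammar
with axiom `X_a`, then `F_a(L) = L`. -/
theorem xml_language_factors_eq_self [Fintype α]
    (R : α → Set (List α)) (a : α)
    (hG : IsXMLGrammar R) (hred : Reduced R a)
    (L : Set (List (α × Bool))) (hL : L = {w | Gen R a w})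
    (hLa : L ⊆ {w | IsDyckPrime a w}) :
    Fa L a = L := by
  subst hL
  ext w
  constructor
  · rintro ⟨hp, v, hv, hinf⟩
    exact gen_of_infix v.length le_rfl hv hp hinf
  · intro hw
    exact ⟨hLa hw, w, hw, List.infix_refl w⟩
end

section
/- For each XML-language L there is exactly one reduced XML-grammar generating L, up to renaming of the variables. Concretely: if G and G' are reduced XML-grammars over the same alphabet A ∪ Ā with the same axiom letter, and L(G) = L(G'), then for every a ∈ A the production sets coincide: R_a(G) corresponds to R_a(G') under the canonical identification X_a ↦ X_a. -/
variable {α : Type}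

namespace XmlAux

def ht (w : List (α × Bool)) : ℤ := (w.map (fun p => if p.2 then (1:ℤ) else -1)).sum

@[simp] lemma ht_nil : ht ([] : List (α × Bool)) = 0 := rfl

@[simp] lemma ht_cons (p : α × Bool) (w : List (α × Bool)) :
    ht (p :: w) = (if p.2 then 1 else -1) + ht w := by simp [ht]

@[simp] lemma ht_append (u v : List (α × Bool)) : ht (u ++ v) = ht u + ht v := by
  simp [ht]

lemma dyck_ht {w : List (α × Bool)} (h : IsDyck w) : ht w = 0 := by
  induction h with
  | nil => rfl
  | cons a hu hv ihu ihv => simp [ihu, ihv]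

lemma prefix_append_split {p x y : List (α × Bool)} (h : p <+: x ++ y) :
    p <+: x ∨ ∃ q, p = x ++ q ∧ q <+: y := by
  obtain ⟨t, ht⟩ := h
  rcases List.append_eq_append_iff.1 ht with ⟨a', hx, _⟩ | ⟨c', hp, hy⟩
  · exact Or.inl ⟨a', hx.symm⟩
  · exact Or.inr ⟨c', hp, ⟨t, hy.symm⟩⟩

lemma ht_prefix_nonneg {w : List (α × Bool)} (h : IsDyck w) :
    ∀ p, p <+: w → 0 ≤ ht p := by
  induction h with
  | nil => intro p hp; simp [List.prefix_nil.1 hp]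
  | cons a hu hv ihu ihv =>
    rename_i u v
    intro p hp
    match p, hp with
    | [], _ => simp
    | q0 :: q, hp =>
      rw [List.cons_append, List.cons_prefix_cons] at hp
      obtain ⟨rfl, hq⟩ := hp
      rcases prefix_append_split hq with hq | ⟨r, rfl, hr⟩
      · have := ihu q hq; simp; omega
      · match r, hr with
        | [], _ => simp [dyck_ht hu]
        | r0 :: r', hr =>
          rw [List.cons_prefix_cons] at hr
          obtain ⟨rfl, hr'⟩ := hr
          have := ihv r' hr'
          simp [dyck_ht hu]; omega

lemma ht_suffix_nonpos {w s : List (α × Bool)} (h : IsDyck w) (hs : s <:+ w) :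
    ht s ≤ 0 := by
  obtain ⟨x, rfl⟩ := hs
  have h1 := ht_prefix_nonneg h x ⟨s, rfl⟩
  have h2 := dyck_ht h
  rw [ht_append] at h2; omega

lemma dyck_append {u v : List (α × Bool)} (hu : IsDyck u) (hv : IsDyck v) :
    IsDyck (u ++ v) := by
  induction hu generalizing v with
  | nil => simpa
  | cons a h1 h2 ih1 ih2 =>
    have := IsDyck.cons a h1 (ih2 hv)
    simpa [List.append_assoc] using this

lemma prime_dyck {a : α} {w : List (α × Bool)} (h : IsDyckPrime a w) :
    IsDyck w := by
  obtain ⟨u, hu, rfl⟩ := h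
  exact IsDyck.cons a hu IsDyck.nil

lemma prime_ne_nil {w : List (α × Bool)} (h : IsPrime w) : w ≠ [] := by
  obtain ⟨a, u, hu, rfl⟩ := h; simp

lemma flatten_dyck {us : List (List (α × Bool))} (h : ∀ u ∈ us, IsPrime u) :
    IsDyck us.flatten := by
  induction us with
  | nil => exact IsDyck.nil
  | cons u us ih =>
    rw [List.flatten_cons]
    obtain ⟨a, hp⟩ := h u (by simp)
    exact dyck_append (prime_dyck hp) (ih fun v hv => h v (by simp [hv]))

/-- nonempty proper prefix of a Dyck prime has height ≥ 1 -/
lemma prime_proper_prefix {a : α} {w p : List (α × Bool)} (h : IsDyckPrime a w)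
    (hp : p <+: w) (hne : p ≠ []) (hnw : p ≠ w) : 1 ≤ ht p := by
  obtain ⟨u, hu, rfl⟩ := h
  match p, hp, hne, hnw with
  | [], _, hne, _ => exact absurd rfl hne
  | q0 :: q, hp, _, hnw =>
    rw [List.cons_append, List.cons_prefix_cons] at hp
    obtain ⟨rfl, hq⟩ := hp
    rcases prefix_append_split hq with hq | ⟨r, rfl, hr⟩
    · have := ht_prefix_nonneg hu q hq; simp; omega
    · match r, hr, hnw with
      | [], _, _ => simp [dyck_ht hu]
      | [r0], hr, hnw =>
        rw [List.cons_prefix_cons] at hr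
        obtain ⟨rfl, -⟩ := hr
        exact absurd rfl hnw
      | r0 :: r1 :: r', hr, _ =>
        rw [List.cons_prefix_cons] at hr
        exact absurd (List.prefix_nil.1 hr.2) (by simp)

lemma prime_prefix_prime {u v : List (α × Bool)} (hu : IsPrime u) (hv : IsPrime v)
    (h : u <+: v) : u = v := by
  by_contra hne
  obtain ⟨b, hb⟩ := hv
  have h1 := prime_proper_prefix hb h (prime_ne_nil hu) hne
  have h2 := dyck_ht (prime_dyck hu.choose_spec)
  omega

end XmlAux

namespace XmlAux

lemma infix_append_split {w x y : List (α × Bool)} (h : w <:+: x ++ y) :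
    w <:+: x ∨ w <:+: y ∨
      ∃ w₁ w₂, w = w₁ ++ w₂ ∧ w₁ ≠ [] ∧ w₁ <:+ x ∧ w₂ ≠ [] ∧ w₂ <+: y := by
  obtain ⟨s, t, hst⟩ := h
  rw [List.append_assoc] at hst
  rcases List.append_eq_append_iff.1 hst with ⟨a', hx, hwt⟩ | ⟨c', hs, hy⟩
  · rcases List.append_eq_append_iff.1 hwt with ⟨b', ha', ht2⟩ | ⟨c', hw, hy⟩
    · -- a' = w ++ b', so w <+: a' and a' <:+ x
      exact Or.inl ⟨s, b', by rw [hx, ha', List.append_assoc]⟩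
    · -- w = a' ++ c', y = c' ++ t
      subst hw hx hy
      rcases eq_or_ne a' [] with rfl | ha
      · exact Or.inr (Or.inl ⟨[], t, by simp⟩)
      rcases eq_or_ne c' [] with rfl | hc
      · exact Or.inl ⟨s, [], by simp⟩
      exact Or.inr (Or.inr ⟨a', c', rfl, ha, ⟨s, rfl⟩, hc, ⟨t, rfl⟩⟩)
  · subst hs hy
    exact Or.inr (Or.inl ⟨c', t, by rw [List.append_assoc]⟩)

lemma infix_flatten {b : α} {w : List (α × Bool)} {us : List (List (α × Bool))}
    (hus : ∀ u ∈ us, IsPrime u) (hw : IsDyckPrime b w) (h : w <:+: us.flatten) :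
    ∃ u ∈ us, w <:+: u := by
  induction us with
  | nil =>
    simp only [List.flatten_nil, List.infix_nil] at h
    exact absurd h (prime_ne_nil ⟨b, hw⟩)
  | cons u us ih =>
    rw [List.flatten_cons] at h
    rcases infix_append_split h with h | h | ⟨w₁, w₂, rfl, h1ne, h1, h2ne, h2⟩
    · exact ⟨u, by simp, h⟩
    · obtain ⟨u', hu', hw'⟩ := ih (fun v hv => hus v (by simp [hv])) h
      exact ⟨u', by simp [hu'], hw'⟩
    · exfalso
      have hpre : w₁ <+: w₁ ++ w₂ := ⟨w₂, rfl⟩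
      have hnw : w₁ ≠ w₁ ++ w₂ := by
        intro hh
        exact h2ne (by simpa using congrArg List.length hh)
      have h1' := prime_proper_prefix hw hpre h1ne hnw
      have h2' := ht_suffix_nonpos (prime_dyck (hus u (by simp)).choose_spec) h1
      omega

/-- A Dyck-prime factor of `a f ā` (with `f` Dyck) is either everything or inside `f`. -/
lemma factor_step {a b : α} {f w : List (α × Bool)} (hf : IsDyck f)
    (hw : IsDyckPrime b w) (h : w <:+: (a, true) :: f ++ [(a, false)]) :
    w = (a, true) :: f ++ [(a, false)] ∨ w <:+: f := by
  obtain ⟨s, t, hst⟩ := h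
  match s, hst with
  | [], hst =>
    -- w is a prefix
    rcases eq_or_ne w ((a, true) :: f ++ [(a, false)]) with rfl | hne
    · exact Or.inl rfl
    exfalso
    have hpre : w <+: (a, true) :: f ++ [(a, false)] := ⟨t, by simpa using hst⟩
    have h1 := prime_proper_prefix (a := a) ⟨f, hf, rfl⟩ hpre (prime_ne_nil ⟨b, hw⟩) hne
    have h2 := dyck_ht (prime_dyck hw)
    omega
  | s0 :: s', hst =>
    rw [List.cons_append, List.cons_append] at hst
    have hs0 : s0 = (a, true) := by
      have := congrArg (List.head?) hst
      simpa using this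
    subst hs0
    have hst' : s' ++ w ++ t = f ++ [(a, false)] := by
      simpa using hst
    rcases List.eq_nil_or_concat t with rfl | ⟨t', x, rfl⟩
    · -- w is a suffix ending at ā
      exfalso
      obtain ⟨u, hu, rfl⟩ := hw
      rw [List.append_nil] at hst'
      have e : (s' ++ ((b, true) :: u)) ++ [(b, false)] = f ++ [(a, false)] := by
        simpa [List.append_assoc] using hst'
      have hlen : ([(b, false)] : List (α × Bool)).length = ([(a, false)] : List (α × Bool)).length := rfl
      obtain ⟨he, -⟩ := List.append_inj' e hlen
      -- (b,true) :: u is a suffix of f with height 1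
      have hsuf : ((b, true) :: u) <:+ f := ⟨s', by simpa using he⟩
      have h1 := ht_suffix_nonpos hf hsuf
      have h2 := dyck_ht hu
      simp [ht_cons, h2] at h1
    · -- w lies inside f
      have e : (s' ++ w ++ t') ++ [x] = f ++ [(a, false)] := by
        simpa [List.concat_eq_append, List.append_assoc] using hst'
      have hlen : ([x] : List (α × Bool)).length = ([(a, false)] : List (α × Bool)).length := rfl
      exact Or.inr ⟨s', t', (List.append_inj' e hlen).1⟩

lemma flatten_primes_inj : ∀ (us vs : List (List (α × Bool))),
    (∀ u ∈ us, IsPrime u) → (∀ v ∈ vs, IsPrime v) →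
    us.flatten = vs.flatten → us = vs := by
  intro us
  induction us with
  | nil =>
    intro vs _ hvs h
    match vs with
    | [] => rfl
    | v :: vs =>
      exfalso
      rw [List.flatten_nil, List.flatten_cons] at h
      have := prime_ne_nil (hvs v (by simp))
      cases v with
      | nil => exact this rfl
      | cons a l => simp at h
  | cons u us ih =>
    intro vs hus hvs h
    match vs with
    | [] =>
      exfalso
      rw [List.flatten_nil, List.flatten_cons] at h
      have := prime_ne_nil (hus u (by simp))
      cases u with
      | nil => exact this rfl
      | cons a l => simp at h
    | v :: vs =>
      rw [List.flatten_cons, List.flatten_cons] at h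
      have huv : u = v := by
        have h1 : u <+: u ++ us.flatten := ⟨us.flatten, rfl⟩
        have h2 : v <+: u ++ us.flatten := by rw [h]; exact ⟨vs.flatten, rfl⟩
        rcases List.prefix_or_prefix_of_prefix h1 h2 with hp | hp
        · exact prime_prefix_prime (hus u (by simp)) (hvs v (by simp)) hp
        · exact (prime_prefix_prime (hvs v (by simp)) (hus u (by simp)) hp).symm
      subst huv
      have h' : us.flatten = vs.flatten := by
        exact List.append_cancel_left h
      rw [ih vs (fun x hx => hus x (by simp [hx])) (fun x hx => hvs x (by simp [hx])) h']

lemma prime_letter_unique {a b : α} {w : List (α × Bool)}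
    (ha : IsDyckPrime a w) (hb : IsDyckPrime b w) : a = b := by
  obtain ⟨u, -, rfl⟩ := ha
  obtain ⟨v, -, he⟩ := hb
  have := congrArg (List.head?) he
  simp at this
  exact this

lemma forall₂_prime_eq {m m' : List α} {us : List (List (α × Bool))}
    (h : List.Forall₂ IsDyckPrime m us) (h' : List.Forall₂ IsDyckPrime m' us) :
    m = m' := by
  induction h generalizing m' with
  | nil => cases h'; rfl
  | cons hp _ ih =>
    cases h' with
    | cons hp' ht' =>
      rw [prime_letter_unique hp hp', ih ht']

end XmlAux

namespace XmlAux

lemma forall₂_mem_right {r : α → List (α × Bool) → Prop} {m : List α}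
    {us : List (List (α × Bool))} (h : List.Forall₂ r m us) :
    ∀ u ∈ us, ∃ b, r b u := by
  induction h with
  | nil => simp
  | cons hr _ ih =>
    intro u hu
    rcases List.mem_cons.1 hu with rfl | hu
    · exact ⟨_, hr⟩
    · exact ih u hu

variable {R : α → Set (List α)}

lemma gen_prime_aux : ∀ n (w : List (α × Bool)), w.length ≤ n →
    ∀ a, Gen R a w → IsDyckPrime a w := by
  intro n
  induction n with
  | zero =>
    intro w hlen a hg
    cases hg; simp at hlen
  | succ n ih =>
    intro w hlen a hg
    cases hg with
    | mk a m us hm hf =>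
      refine ⟨us.flatten, ?_, rfl⟩
      apply flatten_dyck
      intro u hu
      obtain ⟨b, hb⟩ := forall₂_mem_right hf u hu
      have hinf : u <:+: us.flatten := List.infix_of_mem_flatten hu
      have hl : u.length ≤ n := by
        have := hinf.length_le
        simp only [List.length_append, List.length_cons, List.length_singleton] at hlen
        omega
      exact ⟨b, ih u hl b hb⟩

lemma gen_prime {a : α} {w : List (α × Bool)} (h : Gen R a w) : IsDyckPrime a w :=
  gen_prime_aux w.length w le_rfl a h

lemma gen_infix_aux : ∀ n (v : List (α × Bool)), v.length ≤ n →
    ∀ a, Gen R a v → ∀ b w, IsDyckPrime b w → w <:+: v → Gen R b w := by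
  intro n
  induction n with
  | zero =>
    intro v hlen a hg
    cases hg; simp at hlen
  | succ n ih =>
    intro v hlen a hg b w hw hinf
    cases hg with
    | mk a m us hm hf =>
      have hus : ∀ u ∈ us, IsPrime u := fun u hu => by
        obtain ⟨c, hc⟩ := forall₂_mem_right hf u hu
        exact ⟨c, gen_prime hc⟩
      rcases factor_step (flatten_dyck hus) hw hinf with heq | hinn
      · have hb : b = a := by
          have hpa : IsDyckPrime a ((a, true) :: us.flatten ++ [(a, false)]) :=
            ⟨us.flatten, flatten_dyck hus, rfl⟩
          rw [heq] at hw
          exact prime_letter_unique hw hpa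
        subst hb
        rw [heq]
        exact Gen.mk b m us hm hf
      · obtain ⟨u, hu, hwu⟩ := infix_flatten hus hw hinn
        obtain ⟨c, hc⟩ := forall₂_mem_right hf u hu
        have hl : u.length ≤ n := by
          have h1 := (List.infix_of_mem_flatten hu).length_le
          simp only [List.length_append, List.length_cons, List.length_singleton] at hlen
          omega
        exact ih u hl c hc b w hw hwu

lemma gen_infix {a b : α} {v w : List (α × Bool)} (hg : Gen R a v)
    (hw : IsDyckPrime b w) (hinf : w <:+: v) : Gen R b w :=
  gen_infix_aux v.length v le_rfl a hg b w hw hinf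

lemma exists_forall₂_gen (hprod : ∀ a, ∃ w, Gen R a w) (m : List α) :
    ∃ us, List.Forall₂ (Gen R) m us := by
  induction m with
  | nil => exact ⟨[], List.Forall₂.nil⟩
  | cons b m ih =>
    obtain ⟨us, hus⟩ := ih
    obtain ⟨w, hw⟩ := hprod b
    exact ⟨w :: us, List.Forall₂.cons hw hus⟩

lemma gen_factor_of_accessible {a₀ : α} (hred : Reduced R a₀) :
    ∀ a w, Gen R a w → ∃ v, Gen R a₀ v ∧ w <:+: v := by
  intro a
  induction hred.1 a with
  | refl => exact fun w hw => ⟨w, hw, List.infix_refl w⟩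
  | tail hab hr ih =>
    rename_i b c
    intro w hw
    obtain ⟨m, hm, hcm⟩ := hr
    obtain ⟨m₁, m₂, rfl⟩ := List.append_of_mem hcm
    obtain ⟨us₁, hus₁⟩ := exists_forall₂_gen hred.2 m₁
    obtain ⟨us₂, hus₂⟩ := exists_forall₂_gen hred.2 m₂
    have hfa : List.Forall₂ (Gen R) (m₁ ++ c :: m₂) (us₁ ++ w :: us₂) :=
      List.rel_append hus₁ (List.Forall₂.cons hw hus₂)
    have hgb : Gen R b ((b, true) :: (us₁ ++ w :: us₂).flatten ++ [(b, false)]) :=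
      Gen.mk b _ _ hm hfa
    obtain ⟨v, hv, hinf⟩ := ih _ hgb
    refine ⟨v, hv, List.IsInfix.trans ?_ hinf⟩
    have h1 : w <:+: (us₁ ++ w :: us₂).flatten := by
      exact List.infix_of_mem_flatten (by simp)
    refine h1.trans ?_
    exact ⟨[(b, true)], [(b, false)], by simp⟩

lemma subset_surface {a₀ : α} (hred : Reduced R a₀) (a : α) :
    R a ⊆ Surface {w | Gen R a₀ w} a := by
  intro m hm
  obtain ⟨us, hus⟩ := exists_forall₂_gen hred.2 m
  have hg : Gen R a ((a, true) :: us.flatten ++ [(a, false)]) := Gen.mk a m us hm hus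
  obtain ⟨v, hv, hinf⟩ := gen_factor_of_accessible hred a _ hg
  exact ⟨us, hus.imp (fun _ _ hx => gen_prime hx), gen_prime hg, v, hv, hinf⟩

lemma gen_inv {a : α} {w : List (α × Bool)} (h : Gen R a w) :
    ∃ m us, m ∈ R a ∧ List.Forall₂ (Gen R) m us ∧
      w = (a, true) :: us.flatten ++ [(a, false)] := by
  cases h with
  | mk a m us hm hf => exact ⟨m, us, hm, hf, rfl⟩

lemma surface_subset {a₀ : α} (a : α) :
    Surface {w | Gen R a₀ w} a ⊆ R a := by
  rintro m ⟨us, hus, hprime, v, hv, hinf⟩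
  have hg : Gen R a ((a, true) :: us.flatten ++ [(a, false)]) :=
    gen_infix hv hprime hinf
  obtain ⟨m', us', hm', hf', heq⟩ := gen_inv hg
  have hflat : us.flatten = us'.flatten := by simpa using heq
  have hus' : us = us' :=
    flatten_primes_inj us us'
      (fun u hu => (forall₂_mem_right hus u hu).imp (fun _ h => h))
      (fun u hu => ((forall₂_mem_right hf' u hu).imp (fun _ h => gen_prime h)))
      hflat
  have hm : m = m' := by
    apply forall₂_prime_eq hus
    rw [hus']
    exact hf'.imp (fun _ _ hx => gen_prime hx)
  rw [hm]
  exact hm' 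

end XmlAux

/-- Proposition 3.8: an XML-language has exactly one reduced XML-grammar (up to
renaming of variables): two reduced XML-grammars with the same axiom generating
the same language have the same production sets. -/
theorem xml_grammar_unique [Fintype α]
    (R R' : α → Set (List α)) (a₀ : α)
    (hG : IsXMLGrammar R) (hG' : IsXMLGrammar R')
    (hred : Reduced R a₀) (hred' : Reduced R' a₀)
    (hL : {w | Gen R a₀ w} = {w | Gen R' a₀ w}) :
    ∀ a : α, R a = R' a := by
  intro a
  have h1 := XmlAux.subset_surface hred a
  have h2 := XmlAux.surface_subset (R := R) (a₀ := a₀) a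
  have h1' := XmlAux.subset_surface hred' a
  have h2' := XmlAux.surface_subset (R := R') (a₀ := a₀) a
  rw [hL] at h1
  rw [← hL] at h1'
  exact Set.Subset.antisymm (h1.trans h2') (h1'.trans h2)
end

section
/- The intersection of two XML-languages is an XML-language. More precisely, if L = L(G) and L' = L(G') for XML-grammars G, G' over the same alphabet, then the product grammar G × G' with variables (X, X') and productions (X,X') → a(X₁,X'₁)···(Xₙ,X'ₙ)ā whenever X → aX₁···Xₙā in G and X' → aX'₁···X'ₙā in G', satisfies L_{G×G'}((X,X')) = L_G(X) ∩ L_{G'}(X') for all pairs of nonterminals. -/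
variable {α : Type}

namespace XMLAux

def bal (w : List (α × Bool)) : ℤ := (w.map fun p => if p.2 then (1:ℤ) else -1).sum

@[simp] lemma bal_nil : bal ([] : List (α × Bool)) = 0 := rfl

@[simp] lemma bal_cons (x : α × Bool) (w : List (α × Bool)) :
    bal (x :: w) = (if x.2 then (1:ℤ) else -1) + bal w := by simp [bal]

@[simp] lemma bal_append (u v : List (α × Bool)) : bal (u ++ v) = bal u + bal v := by
  simp [bal]

lemma dyck_bal {w : List (α × Bool)} (h : IsDyck w) : bal w = 0 := by
  induction h with
  | nil => simp
  | cons a hu hv ihu ihv => simp [ihu, ihv]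

lemma dyck_bal_prefix {w : List (α × Bool)} (h : IsDyck w) :
    ∀ p q, w = p ++ q → 0 ≤ bal p := by
  induction h with
  | nil =>
    intro p q hpq
    obtain ⟨rfl, rfl⟩ := List.append_eq_nil_iff.mp hpq.symm
    simp
  | @cons a u v hu hv ihu ihv =>
    intro p q hpq
    match p, hpq with
    | [], _ => simp
    | (x :: p'), hpq =>
      rw [List.cons_append] at hpq
      obtain ⟨rfl, htl⟩ := List.cons_eq_cons.mp hpq
      rcases List.append_eq_append_iff.mp htl.symm with ⟨r, hr1, hr2⟩ | ⟨r, hr1, hr2⟩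
      · -- hr1 : u = p' ++ r
        have := ihu p' r hr1
        simp
        omega
      · -- hr1 : p' = u ++ r, hr2 : r ++ q = (a,false) :: v  (check direction)
        subst hr1
        match r, hr2 with
        | [], _ => simp [dyck_bal hu]
        | (y :: r'), hr2 =>
          obtain ⟨rfl, hv'⟩ := List.cons_eq_cons.mp hr2
          have := ihv r' q hv'
          simp [dyck_bal hu]
          omega

lemma prime_bal {a : α} {w : List (α × Bool)} (h : IsDyckPrime a w) : bal w = 0 := by
  obtain ⟨u, hu, rfl⟩ := h
  simp [dyck_bal hu]

lemma prime_prefix {p q t : List (α × Bool)} (hp : IsPrime p) (hq : IsPrime q)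
    (h : p ++ t = q) : p = q := by
  obtain ⟨a, u, hu, rfl⟩ := hp
  obtain ⟨b, v, hv, rfl⟩ := hq
  rw [List.cons_append] at h
  obtain ⟨hab, htl⟩ := List.cons_eq_cons.mp h
  have hab' : a = b := congrArg Prod.fst hab
  subst hab'
  rcases List.append_eq_append_iff.mp htl with ⟨r, hr1, hr2⟩ | ⟨r, hr1, hr2⟩
  · -- hr1 : v = (u ++ [(a,false)]) ++ r
    exfalso
    have := dyck_bal_prefix hv _ r hr1
    simp [dyck_bal hu] at this
  · -- hr1 : u ++ [(a,false)] = v ++ r, hr2 : [(a, false)] = r ++ t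
    match r, hr2 with
    | [], hr2 =>
      exfalso
      simp at hr1
      have h1 := dyck_bal hu
      have h2 := dyck_bal hv
      have : bal (u ++ [(a, false)]) = bal v := by rw [hr1]
      simp [h1, h2] at this
    | (y :: r'), hr2 =>
      obtain ⟨rfl, hr'⟩ := List.cons_eq_cons.mp hr2
      obtain ⟨rfl, rfl⟩ := List.append_eq_nil_iff.mp hr'.symm
      simp at hr1 ⊢
      rw [hr1]

lemma prime_ne_nil {p : List (α × Bool)} (hp : IsPrime p) : p ≠ [] := by
  obtain ⟨a, u, -, rfl⟩ := hp; simp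

lemma flatten_inj : ∀ (us us' : List (List (α × Bool))),
    (∀ u ∈ us, IsPrime u) → (∀ u ∈ us', IsPrime u) →
    us.flatten = us'.flatten → us = us' := by
  intro us
  induction us with
  | nil =>
    intro us' _ h2 hf
    match us' with
    | [] => rfl
    | (u' :: t') =>
      exfalso
      simp at hf
      exact prime_ne_nil (h2 u' (by simp)) hf.1
  | cons u us ih =>
    intro us' h1 h2 hf
    match us' with
    | [] =>
      exfalso
      simp at hf
      exact prime_ne_nil (h1 u (by simp)) hf.1
    | (u' :: t') =>
      simp only [List.flatten_cons] at hf
      have huu' : u = u' := by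
        rcases List.append_eq_append_iff.mp hf with ⟨r, hr1, -⟩ | ⟨r, hr1, -⟩
        · exact prime_prefix (h1 u (by simp)) (h2 u' (by simp)) hr1.symm
        · exact (prime_prefix (h2 u' (by simp)) (h1 u (by simp)) hr1.symm).symm
      subst huu'
      have := List.append_cancel_left hf
      rw [ih t' (fun x hx => h1 x (by simp [hx])) (fun x hx => h2 x (by simp [hx])) this]

lemma dyck_append {u v : List (α × Bool)} (hu : IsDyck u) (hv : IsDyck v) :
    IsDyck (u ++ v) := by
  induction hu generalizing v with
  | nil => simpa
  | @cons a x y hx hy ihx ihy =>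
    have := IsDyck.cons a hx (ihy hv)
    simpa using this

lemma prime_dyck {a : α} {w : List (α × Bool)} (h : IsDyckPrime a w) : IsDyck w := by
  obtain ⟨u, hu, rfl⟩ := h
  simpa using IsDyck.cons a hu IsDyck.nil

lemma dyck_flatten : ∀ (us : List (List (α × Bool))), (∀ u ∈ us, IsDyck u) →
    IsDyck us.flatten := by
  intro us
  induction us with
  | nil => intro; simpa using IsDyck.nil
  | cons u t ih =>
    intro h
    simpa using dyck_append (h u (by simp)) (ih fun x hx => h x (by simp [hx]))

lemma forall₂_mem_right {β γ : Type*} {r : β → γ → Prop} :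
    ∀ {l₁ : List β} {l₂ : List γ}, List.Forall₂ r l₁ l₂ → ∀ b ∈ l₂, ∃ a ∈ l₁, r a b := by
  intro l₁ l₂ h
  induction h with
  | nil => simp
  | cons hab htl ih =>
    intro b hb
    rcases hb with _ | hb
    · exact ⟨_, by simp, hab⟩
    · obtain ⟨a, ha, har⟩ := ih _ (by assumption)
      exact ⟨a, by simp [ha], har⟩

lemma forall₂_imp_mem {β γ : Type*} {r s : β → γ → Prop} :
    ∀ {l₁ : List β} {l₂ : List γ}, List.Forall₂ r l₁ l₂ →
    (∀ a b, b ∈ l₂ → r a b → s a b) → List.Forall₂ s l₁ l₂ := by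
  intro l₁ l₂ h
  induction h with
  | nil => intro; exact List.Forall₂.nil
  | @cons a b t₁ t₂ hab htl ih =>
    intro himp
    exact List.Forall₂.cons (himp a b (by simp) hab)
      (ih fun x y hy => himp x y (by simp [hy]))

lemma forall₂_and {β γ : Type*} {r s : β → γ → Prop} :
    ∀ {l₁ : List β} {l₂ : List γ}, List.Forall₂ r l₁ l₂ → List.Forall₂ s l₁ l₂ →
    List.Forall₂ (fun a b => r a b ∧ s a b) l₁ l₂ := by
  intro l₁ l₂ h
  induction h with
  | nil => intro; exact List.Forall₂.nil
  | cons hab htl ih =>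
    intro h2
    cases h2 with
    | cons h2ab h2tl => exact List.Forall₂.cons ⟨hab, h2ab⟩ (ih h2tl)

lemma forall₂_zip {β β' γ : Type*} {r : β → γ → Prop} {s : β' → γ → Prop} :
    ∀ {l₁ : List β} {l₁' : List β'} {l₂ : List γ},
    List.Forall₂ r l₁ l₂ → List.Forall₂ s l₁' l₂ →
    List.Forall₂ (fun p u => r p.1 u ∧ s p.2 u) (l₁.zip l₁') l₂ := by
  intro l₁ l₁' l₂ h
  induction h generalizing l₁' with
  | nil => intro h2; cases h2; exact List.Forall₂.nil
  | cons hab htl ih =>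
    intro h2
    cases h2 with
    | cons h2ab h2tl => exact List.Forall₂.cons ⟨hab, h2ab⟩ (ih h2tl)

end XMLAux

/-- The language generated by nonterminal `X` in a grammar with nonterminal type `ν`,
labelling `ℓ : ν → α` (the tag of each nonterminal), and production bodies
`R : ν → Set (List ν)` (a body `X₁ ⋯ Xₙ ∈ R X` encodes `X → ℓ(X) X₁ ⋯ Xₙ \overline{ℓ(X)}`). -/
inductive GenN {ν : Type} (ℓ : ν → α) (R : ν → Set (List ν)) : ν → List (α × Bool) → Prop
  | mk (X : ν) (m : List ν) (us : List (List (α × Bool))) :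
      m ∈ R X → List.Forall₂ (GenN ℓ R) m us →
      GenN ℓ R X ((ℓ X, true) :: us.flatten ++ [(ℓ X, false)])

/-- The production bodies of the product grammar `G × G'`:
`(X, X') → a (X₁, X'₁) ⋯ (Xₙ, X'ₙ) ā` whenever `X → a X₁ ⋯ Xₙ ā` in `G` and
`X' → a X'₁ ⋯ X'ₙ ā` in `G'`. -/
def ProdR {ν ν' : Type} (ℓ : ν → α) (ℓ' : ν' → α)
    (R : ν → Set (List ν)) (R' : ν' → Set (List ν')) :
    ν × ν' → Set (List (ν × ν')) :=
  fun p => {l | ℓ p.1 = ℓ' p.2 ∧ l.map Prod.fst ∈ R p.1 ∧ l.map Prod.snd ∈ R' p.2}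

namespace XMLAux

variable {ν ν' : Type} {ℓ : ν → α} {ℓ' : ν' → α}
  {R : ν → Set (List ν)} {R' : ν' → Set (List ν')}

lemma genN_shape {X : ν} {w : List (α × Bool)} (h : GenN ℓ R X w) :
    ∃ t, w = (ℓ X, true) :: t ++ [(ℓ X, false)] := by
  cases h with
  | mk X m us hm hf => exact ⟨us.flatten, rfl⟩

lemma genN_inv {X : ν} {w : List (α × Bool)} (h : GenN ℓ R X w) :
    ∃ m us, m ∈ R X ∧ List.Forall₂ (GenN ℓ R) m us ∧
      w = (ℓ X, true) :: us.flatten ++ [(ℓ X, false)] := by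
  cases h with
  | mk X m us hm hf => exact ⟨m, us, hm, hf, rfl⟩

lemma genN_prime : ∀ (w : List (α × Bool)) (X : ν), GenN ℓ R X w → IsDyckPrime (ℓ X) w := by
  suffices H : ∀ (n : ℕ) (w : List (α × Bool)), w.length ≤ n → ∀ X, GenN ℓ R X w →
      IsDyckPrime (ℓ X) w from fun w X h => H w.length w le_rfl X h
  intro n
  induction n with
  | zero =>
    intro w hw X h
    cases h with
    | mk X m us hm hf => simp at hw
  | succ n ih =>
    intro w hw X h
    cases h with
    | mk X m us hm hf =>
      refine ⟨us.flatten, ?_, rfl⟩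
      have hlen : ∀ u ∈ us, u.length ≤ n := by
        intro u hu
        have h1 := (List.sublist_flatten_of_mem hu).length_le
        simp at hw h1
        omega
      refine dyck_flatten us fun u hu => ?_
      obtain ⟨Y, -, hg⟩ := forall₂_mem_right hf u hu
      exact prime_dyck (ih u (hlen u hu) Y hg)

lemma genN_isPrime {X : ν} {w : List (α × Bool)} (h : GenN ℓ R X w) : IsPrime w :=
  ⟨ℓ X, genN_prime w X h⟩

/-- combining derivations of the same word in two grammars into the product grammar -/
lemma genN_prod : ∀ (w : List (α × Bool)) (X : ν) (X' : ν'),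
    GenN ℓ R X w → GenN ℓ' R' X' w →
    GenN (fun p => ℓ p.1) (ProdR ℓ ℓ' R R') (X, X') w := by
  suffices H : ∀ (n : ℕ) (w : List (α × Bool)), w.length ≤ n → ∀ X X',
      GenN ℓ R X w → GenN ℓ' R' X' w →
      GenN (fun p => ℓ p.1) (ProdR ℓ ℓ' R R') (X, X') w from
    fun w X X' h h' => H w.length w le_rfl X X' h h'
  intro n
  induction n with
  | zero =>
    intro w hw X X' h h'
    cases h with
    | mk X m us hm hf => simp at hw
  | succ n ih =>
    intro w hw X X' h h'
    cases h with
    | mk X m us hm hf =>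
      obtain ⟨m', us', hm', hf', heq⟩ := genN_inv h'
      -- heq : (ℓ X, true) :: us.flatten ++ [(ℓ X, false)]
      --     = (ℓ' X', true) :: us'.flatten ++ [(ℓ' X', false)]
      rw [List.cons_append, List.cons_append] at heq
      obtain ⟨hhd, htl⟩ := List.cons_eq_cons.mp heq
      have hXX' : ℓ X = ℓ' X' := congrArg Prod.fst hhd
      rw [← hXX'] at htl
      have hflat : us.flatten = us'.flatten := List.append_cancel_right htl
      have husus' : us = us' := by
        refine flatten_inj us us' ?_ ?_ hflat
        · intro u hu
          obtain ⟨Y, -, hg⟩ := forall₂_mem_right hf u hu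
          exact genN_isPrime hg
        · intro u hu
          obtain ⟨Y, -, hg⟩ := forall₂_mem_right hf' u hu
          exact genN_isPrime hg
      subst husus'
      have hlen : ∀ u ∈ us, u.length ≤ n := by
        intro u hu
        have h1 := (List.sublist_flatten_of_mem hu).length_le
        simp at hw h1
        omega
      have hlm : m.length = m'.length := by
        rw [hf.length_eq, hf'.length_eq]
      have hmem : (m.zip m') ∈ ProdR ℓ ℓ' R R' (X, X') := by
        refine ⟨hXX', ?_, ?_⟩
        · rw [List.map_fst_zip (le_of_eq hlm)]; exact hm
        · rw [List.map_snd_zip (le_of_eq hlm.symm)]; exact hm'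
      have hzip := forall₂_zip hf hf'
      have hfz : List.Forall₂ (GenN (fun p => ℓ p.1) (ProdR ℓ ℓ' R R')) (m.zip m') us :=
        forall₂_imp_mem hzip fun p u hu hpu => ih u (hlen u hu) p.1 p.2 hpu.1 hpu.2
      exact GenN.mk (X, X') (m.zip m') us hmem hfz

lemma genN_proj1 : ∀ (w : List (α × Bool)) (p : ν × ν'),
    GenN (fun p => ℓ p.1) (ProdR ℓ ℓ' R R') p w → GenN ℓ R p.1 w := by
  suffices H : ∀ (n : ℕ) (w : List (α × Bool)), w.length ≤ n → ∀ p,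
      GenN (fun p => ℓ p.1) (ProdR ℓ ℓ' R R') p w → GenN ℓ R p.1 w from
    fun w p h => H w.length w le_rfl p h
  intro n
  induction n with
  | zero =>
    intro w hw p h
    cases h with
    | mk X m us hm hf => simp at hw
  | succ n ih =>
    intro w hw p h
    cases h with
    | mk p m us hm hf =>
      have hlen : ∀ u ∈ us, u.length ≤ n := by
        intro u hu
        have h1 := (List.sublist_flatten_of_mem hu).length_le
        simp at hw h1
        omega
      have hfm : List.Forall₂ (GenN ℓ R) (m.map Prod.fst) us := by
        rw [List.forall₂_map_left_iff]
        exact forall₂_imp_mem hf fun q u hu hqu => ih u (hlen u hu) q hqu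
      exact GenN.mk p.1 (m.map Prod.fst) us hm.2.1 hfm

lemma genN_proj2 : ∀ (w : List (α × Bool)) (p : ν × ν'),
    GenN (fun p => ℓ p.1) (ProdR ℓ ℓ' R R') p w → GenN ℓ' R' p.2 w := by
  suffices H : ∀ (n : ℕ) (w : List (α × Bool)), w.length ≤ n → ∀ p,
      GenN (fun p => ℓ p.1) (ProdR ℓ ℓ' R R') p w → GenN ℓ' R' p.2 w from
    fun w p h => H w.length w le_rfl p h
  intro n
  induction n with
  | zero =>
    intro w hw p h
    cases h with
    | mk X m us hm hf => simp at hw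
  | succ n ih =>
    intro w hw p h
    cases h with
    | mk p m us hm hf =>
      have hlen : ∀ u ∈ us, u.length ≤ n := by
        intro u hu
        have h1 := (List.sublist_flatten_of_mem hu).length_le
        simp at hw h1
        omega
      have hfm : List.Forall₂ (GenN ℓ' R') (m.map Prod.snd) us := by
        rw [List.forall₂_map_left_iff]
        exact forall₂_imp_mem hf fun q u hu hqu => ih u (hlen u hu) q hqu
      have := GenN.mk p.2 (m.map Prod.snd) us hm.2.2 hfm
      rwa [← hm.1] at this

lemma genN_mono {R₂ : ν → Set (List ν)} (hR : ∀ Y, R Y ⊆ R₂ Y) :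
    ∀ (w : List (α × Bool)) (X : ν), GenN ℓ R X w → GenN ℓ R₂ X w := by
  suffices H : ∀ (n : ℕ) (w : List (α × Bool)), w.length ≤ n → ∀ X, GenN ℓ R X w →
      GenN ℓ R₂ X w from fun w X h => H w.length w le_rfl X h
  intro n
  induction n with
  | zero =>
    intro w hw X h
    cases h with
    | mk X m us hm hf => simp at hw
  | succ n ih =>
    intro w hw X h
    cases h with
    | mk X m us hm hf =>
      have hlen : ∀ u ∈ us, u.length ≤ n := by
        intro u hu
        have h1 := (List.sublist_flatten_of_mem hu).length_le
        simp at hw h1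
        omega
      exact GenN.mk X m us (hR X hm)
        (forall₂_imp_mem hf fun Y u hu hg => ih u (hlen u hu) Y hg)

lemma eq_of_forall₂_shape (hinj : Function.Injective ℓ) :
    ∀ {m m' : List ν} {us : List (List (α × Bool))},
    List.Forall₂ (fun X u => ∃ t, u = (ℓ X, true) :: t) m us →
    List.Forall₂ (fun X u => ∃ t, u = (ℓ X, true) :: t) m' us → m = m' := by
  intro m m' us h
  induction h generalizing m' with
  | nil => intro h2; cases h2; rfl
  | @cons X u t₁ t₂ hXu htl ih =>
    intro h2
    cases h2 with
    | cons h2X h2tl =>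
      rename_i X' t'
      obtain ⟨s, rfl⟩ := hXu
      obtain ⟨s', hs'⟩ := h2X
      have : ℓ X = ℓ X' := congrArg Prod.fst (List.cons_eq_cons.mp hs').1
      rw [hinj this, ih h2tl]

lemma genN_diag (hinj : Function.Injective ℓ) {R₂ : ν → Set (List ν)} :
    ∀ (w : List (α × Bool)) (X : ν), GenN ℓ R X w → GenN ℓ R₂ X w →
    GenN ℓ (fun Y => R Y ∩ R₂ Y) X w := by
  suffices H : ∀ (n : ℕ) (w : List (α × Bool)), w.length ≤ n → ∀ X,
      GenN ℓ R X w → GenN ℓ R₂ X w → GenN ℓ (fun Y => R Y ∩ R₂ Y) X w from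
    fun w X h h' => H w.length w le_rfl X h h'
  intro n
  induction n with
  | zero =>
    intro w hw X h h'
    cases h with
    | mk X m us hm hf => simp at hw
  | succ n ih =>
    intro w hw X h h'
    cases h with
    | mk X m us hm hf =>
      obtain ⟨m', us', hm', hf', heq⟩ := genN_inv h'
      rw [List.cons_append, List.cons_append] at heq
      obtain ⟨-, htl⟩ := List.cons_eq_cons.mp heq
      have hflat : us.flatten = us'.flatten := List.append_cancel_right htl
      have husus' : us = us' := by
        refine flatten_inj us us' ?_ ?_ hflat
        · intro u hu
          obtain ⟨Y, -, hg⟩ := forall₂_mem_right hf u hu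
          exact genN_isPrime hg
        · intro u hu
          obtain ⟨Y, -, hg⟩ := forall₂_mem_right hf' u hu
          exact genN_isPrime hg
      subst husus'
      have hmm' : m = m' := by
        refine eq_of_forall₂_shape hinj
          (forall₂_imp_mem hf fun Y u _ hg => ?_)
          (forall₂_imp_mem hf' fun Y u _ hg => ?_)
        · obtain ⟨t, ht⟩ := genN_shape hg
          exact ⟨t ++ [(ℓ Y, false)], by simpa using ht⟩
        · obtain ⟨t, ht⟩ := genN_shape hg
          exact ⟨t ++ [(ℓ Y, false)], by simpa using ht⟩
      subst hmm'
      have hlen : ∀ u ∈ us, u.length ≤ n := by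
        intro u hu
        have h1 := (List.sublist_flatten_of_mem hu).length_le
        simp at hw h1
        omega
      exact GenN.mk X m us ⟨hm, hm'⟩
        (forall₂_imp_mem (forall₂_and hf hf')
          fun Y u hu hg => ih u (hlen u hu) Y hg.1 hg.2)

lemma gen_to_genN {S : α → Set (List α)} :
    ∀ (w : List (α × Bool)) (a : α), Gen S a w → GenN (id : α → α) S a w := by
  suffices H : ∀ (n : ℕ) (w : List (α × Bool)), w.length ≤ n → ∀ a, Gen S a w →
      GenN (id : α → α) S a w from fun w a h => H w.length w le_rfl a h
  intro n
  induction n with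
  | zero =>
    intro w hw a h
    cases h with
    | mk a m us hm hf => simp at hw
  | succ n ih =>
    intro w hw a h
    cases h with
    | mk a m us hm hf =>
      have hlen : ∀ u ∈ us, u.length ≤ n := by
        intro u hu
        have h1 := (List.sublist_flatten_of_mem hu).length_le
        simp at hw h1
        omega
      exact GenN.mk a m us hm
        (forall₂_imp_mem hf fun b u hu hg => ih u (hlen u hu) b hg)

lemma genN_to_gen {S : α → Set (List α)} :
    ∀ (w : List (α × Bool)) (a : α), GenN (id : α → α) S a w → Gen S a w := by
  suffices H : ∀ (n : ℕ) (w : List (α × Bool)), w.length ≤ n → ∀ a,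
      GenN (id : α → α) S a w → Gen S a w from fun w a h => H w.length w le_rfl a h
  intro n
  induction n with
  | zero =>
    intro w hw a h
    cases h with
    | mk a m us hm hf => simp at hw
  | succ n ih =>
    intro w hw a h
    cases h with
    | mk a m us hm hf =>
      have hlen : ∀ u ∈ us, u.length ≤ n := by
        intro u hu
        have h1 := (List.sublist_flatten_of_mem hu).length_le
        simp at hw h1
        omega
      exact Gen.mk a m us hm
        (forall₂_imp_mem hf fun b u hu hg => ih u (hlen u hu) b hg)

lemma gen_iff {S : α → Set (List α)} {a : α} {w : List (α × Bool)} :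
    Gen S a w ↔ GenN (id : α → α) S a w :=
  ⟨gen_to_genN w a, genN_to_gen w a⟩

lemma gen_shape {S : α → Set (List α)} {a : α} {w : List (α × Bool)} (h : Gen S a w) :
    ∃ t, w = (a, true) :: t ++ [(a, false)] := genN_shape (gen_to_genN w a h)

lemma isRegular_inter {T : Type} {L L' : Language T}
    (h : L.IsRegular) (h' : L'.IsRegular) : Language.IsRegular (L ⊓ L') := by
  obtain ⟨σ, hσ, M, hM⟩ := h
  obtain ⟨σ', hσ', M', hM'⟩ := h'
  refine ⟨σ × σ', inferInstance,
    ⟨fun s c => (M.step s.1 c, M'.step s.2 c), (M.start, M'.start),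
      {s | s.1 ∈ M.accept ∧ s.2 ∈ M'.accept}⟩, ?_⟩
  have key : ∀ (x : List T) (s : σ) (t : σ'),
      (⟨fun s c => (M.step s.1 c, M'.step s.2 c), (M.start, M'.start),
        {s | s.1 ∈ M.accept ∧ s.2 ∈ M'.accept}⟩ : DFA T (σ × σ')).evalFrom (s, t) x
        = (M.evalFrom s x, M'.evalFrom t x) := by
    intro x
    induction x with
    | nil => intro s t; rfl
    | cons c x ih =>
      intro s t
      simp only [DFA.evalFrom, List.foldl_cons] at ih ⊢
      exact ih _ _
  ext x
  rw [← hM, ← hM']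
  simp only [DFA.mem_accepts, DFA.eval, key]
  rfl

lemma isRegular_bot {T : Type} : Language.IsRegular (⊥ : Language T) := by
  refine ⟨Unit, inferInstance, ⟨fun _ _ => (), (), ∅⟩, ?_⟩
  ext x
  simp only [DFA.mem_accepts]
  exact iff_of_false (by simp) (Set.notMem_empty x)

end XMLAux

/-- The intersection of two XML-languages is an XML-language; more precisely the
product grammar `G × G'` satisfies `L_{G×G'}((X, X')) = L_G(X) ∩ L_{G'}(X')`
for all pairs of nonterminals. -/
theorem xml_intersection [Fintype α] {ν ν' : Type}
    (ℓ : ν → α) (ℓ' : ν' → α)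
    (hℓ : Function.Bijective ℓ) (hℓ' : Function.Bijective ℓ')
    (R : ν → Set (List ν)) (R' : ν' → Set (List ν'))
    (hR : ∀ X, Language.IsRegular (R X : Language ν))
    (hR' : ∀ X', Language.IsRegular (R' X' : Language ν')) :
    (∀ L L' : Set (List (α × Bool)),
        IsXMLLanguage L → IsXMLLanguage L' → IsXMLLanguage (L ∩ L')) ∧
    (∀ (X : ν) (X' : ν'),
        {w | GenN (fun p => ℓ p.1) (ProdR ℓ ℓ' R R') (X, X') w} =
          {w | GenN ℓ R X w} ∩ {w | GenN ℓ' R' X' w}) := by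
  
  constructor
  · rintro L L' ⟨a₀, S, hS, rfl⟩ ⟨a₀', S', hS', rfl⟩
    by_cases h : a₀ = a₀'
    · subst h
      refine ⟨a₀, fun a => S a ∩ S' a, fun a => XMLAux.isRegular_inter (hS a) (hS' a), ?_⟩
      ext w
      simp only [Set.mem_inter_iff, Set.mem_setOf_eq]
      constructor
      · rintro ⟨h1, h2⟩
        exact XMLAux.genN_to_gen w a₀ (XMLAux.genN_diag Function.injective_id w a₀
          (XMLAux.gen_to_genN w a₀ h1) (XMLAux.gen_to_genN w a₀ h2))
      · intro hg
        refine ⟨?_, ?_⟩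
        · exact XMLAux.genN_to_gen w a₀ (XMLAux.genN_mono
            (fun a => Set.inter_subset_left) w a₀ (XMLAux.gen_to_genN w a₀ hg))
        · exact XMLAux.genN_to_gen w a₀ (XMLAux.genN_mono
            (fun a => Set.inter_subset_right) w a₀ (XMLAux.gen_to_genN w a₀ hg))
    · refine ⟨a₀, fun _ => ∅, fun a => XMLAux.isRegular_bot, ?_⟩
      ext w
      simp only [Set.mem_inter_iff, Set.mem_setOf_eq]
      constructor
      · rintro ⟨h1, h2⟩
        obtain ⟨t, rfl⟩ := XMLAux.gen_shape h1
        obtain ⟨t', ht'⟩ := XMLAux.gen_shape h2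
        rw [List.cons_append, List.cons_append] at ht'
        exact absurd (congrArg Prod.fst (List.cons_eq_cons.mp ht').1) h
      · intro hg
        cases hg with
        | mk a m us hm hf => exact absurd hm (Set.notMem_empty m)
  · intro X X'
    ext w
    simp only [Set.mem_inter_iff, Set.mem_setOf_eq]
    constructor
    · intro hg
      exact ⟨XMLAux.genN_proj1 w (X, X') hg, XMLAux.genN_proj2 w (X, X') hg⟩
    · rintro ⟨h1, h2⟩
      exact XMLAux.genN_prod w X X' h1 h2
end

section
/- Let 𝒮 = {S_a | a ∈ A} be a family of regular languages over A, fix a₀ ∈ A, and let L be the standard language of 𝒮 (the language generated by X_{a₀} in the standard grammar whose productions are X_a → a X_{a₁}···X_{aₙ} ā for each a₁···aₙ ∈ S_a). Then for any language M ⊆ D_{a₀} with S_a(M) = S_a for all a ∈ A, one has F_{a₀}(M) ⊆ L. In particular L is the maximal element (for inclusion) of the family of languages contained in D_{a₀} with surfaces exactly 𝒮. -/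
variable {α : Type}

lemma infix_flatten_of_mem {β : Type*} {l : List β} {L : List (List β)}
    (h : l ∈ L) : l <:+: L.flatten := by
  induction L with
  | nil => simp at h
  | cons x xs ih =>
    rw [List.flatten_cons]
    rcases List.mem_cons.mp h with h | h
    · exact h ▸ (List.prefix_append l xs.flatten).isInfix
    · exact (ih h).trans (List.suffix_append x xs.flatten).isInfix

lemma dyck_factor {u : List (α × Bool)} (h : IsDyck u) :
    ∃ (m : List α) (us : List (List (α × Bool))),
      List.Forall₂ IsDyckPrime m us ∧ u = us.flatten := by
  induction h with
  | nil => exact ⟨[], [], .nil, rfl⟩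
  | cons a hu hv ihu ihv =>
    obtain ⟨m1, us1, h1, rfl⟩ := ihu
    obtain ⟨m2, us2, h2, rfl⟩ := ihv
    exact ⟨a :: m2, ((a, true) :: us1.flatten ++ [(a, false)]) :: us2,
      .cons ⟨us1.flatten, hu, rfl⟩ h2, by simp⟩

lemma forall₂_of_mem {β γ : Type*} {R Q : β → γ → Prop} :
    ∀ {l1 : List β} {l2 : List γ}, List.Forall₂ R l1 l2 →
      (∀ a b, b ∈ l2 → R a b → Q a b) → List.Forall₂ Q l1 l2 := by
  intro l1 l2 h
  induction h with
  | nil => intro _; exact .nil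
  | cons hab h ih =>
    intro hq
    exact .cons (hq _ _ (by simp) hab) (ih fun a b hb => hq a b (by simp [hb]))

lemma gen_of_factor (S : α → Set (List α)) (M : Set (List (α × Bool)))
    (hSM : ∀ a, Surface M a = S a) :
    ∀ (n : ℕ) (w : List (α × Bool)) (a : α), w.length ≤ n → IsDyckPrime a w →
      (∃ v ∈ M, w <:+: v) → Gen S a w := by
  intro n
  induction n with
  | zero =>
    rintro w a hlen ⟨u, hu, rfl⟩ _
    simp at hlen
  | succ n ih =>
    rintro w a hlen ⟨u, hu, rfl⟩ hfac
    obtain ⟨m, us, hf, rfl⟩ := dyck_factor hu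
    have hmem : m ∈ S a := by
      rw [← hSM]
      exact ⟨us, hf, ⟨us.flatten, hu, rfl⟩, hfac⟩
    refine Gen.mk a m us hmem (forall₂_of_mem hf ?_)
    intro b u' hb hp
    have h1 : u' <:+: us.flatten := infix_flatten_of_mem hb
    apply ih u' b
    · have h2 := h1.length_le
      simp at hlen h2
      omega
    · exact hp
    · obtain ⟨v, hv, hinf⟩ := hfac
      refine ⟨v, hv, (h1.trans ?_).trans hinf⟩
      exact ⟨[(a, true)], [(a, false)], by simp⟩

/-- Lemma 4.1 / Theorem 4.2: let `𝒮 = {S a | a ∈ A}` be a family of regular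
languages over `A` and let `L` be the standard language of `𝒮` (generated by
`X_{a₀}` in the standard grammar, whose production bodies are exactly `S a`).
Then for any `M ⊆ D_{a₀}` whose surfaces are exactly `𝒮`, one has
`F_{a₀}(M) ⊆ L`; in particular `M ⊆ L`, so `L` is the maximal element of the
family of languages contained in `D_{a₀}` with surfaces `𝒮`. -/
theorem standard_language_maximal [Fintype α]
    (S : α → Set (List α)) (hS : ∀ a, Language.IsRegular (S a : Language α))
    (a₀ : α) (L : Set (List (α × Bool))) (hL : L = {w | Gen S a₀ w})
    (M : Set (List (α × Bool))) (hM : M ⊆ {w | IsDyckPrime a₀ w})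
    (hSM : ∀ a, Surface M a = S a) :
    Fa M a₀ ⊆ L ∧ M ⊆ L := by
  subst hL
  have key : Fa M a₀ ⊆ {w | Gen S a₀ w} := by
    rintro w ⟨hp, hfac⟩
    exact gen_of_factor S M hSM w.length w a₀ le_rfl hp hfac
  refine ⟨key, fun w hw => key ⟨hM hw, w, hw, List.infix_rfl⟩⟩
end
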